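/- The sum ∑_{n=1}^∞ 3^n · H_n · C(2n,n) / (n · 16^n) equals 2·Li₂(1/3), where Li₂ is the dilogarithm function. -/

import Mathlib

open scoped Nat

noncomputable def bb (n m : ℕ) : ℝ :=
  if 1 ≤ m ∧ m ≤ n then m * ((2*n).choose (n-m)) / n else 0

lemma choose_cast_add (a b : ℕ) : ((a+b).choose a : ℝ) = (a+b)! / (a ! * b !) := by
  rw [Nat.cast_choose ℝ (Nat.le_add_right a b), Nat.add_sub_cancel_left]




lemma bb_nonneg (n m : ℕ) : 0 ≤ bb n m := by
  unfold bb; split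
  · positivity
  · exact le_refl 0

lemma bb_of_not (n m : ℕ) (h : ¬ (1 ≤ m ∧ m ≤ n)) : bb n m = 0 := if_neg h

lemma bb_le (n m : ℕ) : bb n m ≤ 4 ^ n := by
  unfold bb; split
  case isTrue h =>
    have h1 : (m:ℝ) / n ≤ 1 := by
      rw [div_le_one (by exact_mod_cast Nat.lt_of_lt_of_le Nat.zero_lt_one (le_trans h.1 h.2) : (0:ℝ) < n)]
      exact_mod_cast h.2
    have h2 : ((2*n).choose (n-m) : ℝ) ≤ 4 ^ n := by
      have : (2*n).choose (n-m) ≤ 2 ^ (2*n) := by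
        calc (2*n).choose (n-m) ≤ ∑ k ∈ Finset.range (2*n+1), (2*n).choose k := by
              apply Finset.single_le_sum (f := fun k => (2*n).choose k) (fun _ _ => Nat.zero_le _)
              simp [Nat.lt_succ_iff]; omega
          _ = 2 ^ (2*n) := Nat.sum_range_choose _
      calc ((2*n).choose (n-m) : ℝ) ≤ (2:ℝ) ^ (2*n) := by exact_mod_cast this
        _ = 4 ^ n := by rw [pow_mul]; norm_num
    calc (m:ℝ) * ((2*n).choose (n-m)) / n = (m/n) * ((2*n).choose (n-m)) := by ring
      _ ≤ 1 * (4:ℝ)^n := by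
          apply mul_le_mul h1 h2 (by positivity) (by norm_num)
      _ = 4 ^ n := one_mul _
  case isFalse => positivity




lemma bb_main (k j : ℕ) :
    ((k:ℝ)+2) * (((2*(k+3+j)+2).choose (j+2) : ℕ) : ℝ) / ((k:ℝ)+j+4)
      = ((k:ℝ)+1) * (((2*(k+3+j)).choose (j+2) : ℕ) : ℝ) / ((k:ℝ)+3+j)
        + 2 * (((k:ℝ)+2) * (((2*(k+3+j)).choose (j+1) : ℕ) : ℝ) / ((k:ℝ)+3+j))
        + ((k:ℝ)+3) * (((2*(k+3+j)).choose j : ℕ) : ℝ) / ((k:ℝ)+3+j) := by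
  rw [show 2*(k+3+j)+2 = (j+2)+(2*k+j+6) by ring]
  rw [show 2*(k+3+j) = (j+2)+(2*k+j+4) by ring]
  rw [choose_cast_add, choose_cast_add]
  rw [show (j+2)+(2*k+j+4) = (j+1)+(2*k+j+5) by ring]
  rw [choose_cast_add]
  rw [show (j+1)+(2*k+j+5) = j+(2*k+j+6) by ring]
  rw [choose_cast_add]
  have f1 : ((j+2)! : ℝ) = (j+2)*((j+1)*(j !)) := by
    rw [show j+2 = (j+1)+1 by ring, Nat.factorial_succ, Nat.factorial_succ]; push_cast; ring
  have f2 : ((j+1)! : ℝ) = (j+1)*(j !) := by rw [Nat.factorial_succ]; push_cast; ring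
  have f3 : (((j+2)+(2*k+j+6))! : ℝ) = (2*k+2*j+8)*((2*k+2*j+7)*((j+(2*k+j+6))!)) := by
    rw [show (j+2)+(2*k+j+6) = (j+(2*k+j+6)+1)+1 by ring, Nat.factorial_succ, Nat.factorial_succ]
    push_cast; ring
  have f5 : ((2*k+j+6)! : ℝ) = (2*k+j+6)*((2*k+j+5)*((2*k+j+4)!)) := by
    rw [show 2*k+j+6 = (2*k+j+4+1)+1 by ring, Nat.factorial_succ, Nat.factorial_succ]
    push_cast; ring
  have f6 : ((2*k+j+5)! : ℝ) = (2*k+j+5)*((2*k+j+4)!) := by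
    rw [show 2*k+j+5 = (2*k+j+4)+1 by ring, Nat.factorial_succ]; push_cast; ring
  have f7 : ((j+(2*k+j+6))! : ℝ) = (2*k+2*j+6)*((2*k+2*j+5)*((j+(2*k+j+4))!)) := by
    rw [show j+(2*k+j+6) = (j+(2*k+j+4)+1)+1 by ring, Nat.factorial_succ, Nat.factorial_succ]
    push_cast; ring
  rw [f1, f2, f3, f5, f6, f7]
  have p1 : (0:ℝ) < (j ! : ℝ) := by exact_mod_cast Nat.factorial_pos j
  have p2 : (0:ℝ) < ((j+(2*k+j+4))! : ℝ) := by exact_mod_cast Nat.factorial_pos _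
  have p3 : (0:ℝ) < ((2*k+j+4)! : ℝ) := by exact_mod_cast Nat.factorial_pos _
  field_simp
  ring

lemma bb_rec (n k : ℕ) : bb (n+1) (k+2) = bb n (k+1) + 2 * bb n (k+2) + bb n (k+3) := by
  rcases lt_or_ge n (k+1) with h | h
  · rw [bb, if_neg (by omega), bb, if_neg (by omega), bb, if_neg (by omega), bb, if_neg (by omega)]
    ring
  rcases eq_or_lt_of_le h with h1 | h1
  · -- n = k+1
    subst_vars
    rw [bb, if_pos (by omega), bb, if_pos (by omega), bb, if_neg (by omega), bb, if_neg (by omega)]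
    rw [show (k+1+1) - (k+2) = 0 by omega, show (k+1) - (k+1) = 0 by omega]
    simp only [Nat.choose_zero_right]
    push_cast
    have : (k:ℝ)+2 ≠ 0 := by positivity
    have : (k:ℝ)+1 ≠ 0 := by positivity
    field_simp
    ring
  rcases eq_or_lt_of_le (Nat.succ_le_of_lt h1) with h2 | h2
  · -- n = k+2
    have : n = k+2 := by omega
    subst this
    rw [bb, if_pos (by omega), bb, if_pos (by omega), bb, if_pos (by omega), bb, if_neg (by omega)]
    rw [show (k+2+1) - (k+2) = 1 by omega, show (k+2) - (k+1) = 1 by omega,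
        show (k+2) - (k+2) = 0 by omega]
    simp only [Nat.choose_one_right, Nat.choose_zero_right]
    push_cast
    have h3 : (k:ℝ)+3 ≠ 0 := by positivity
    have h2' : (k:ℝ)+2 ≠ 0 := by positivity
    field_simp
    ring
  · -- n ≥ k+3
    obtain ⟨j, rfl⟩ : ∃ j, n = k+3+j := ⟨n - (k+3), by omega⟩
    rw [bb, if_pos (by omega), bb, if_pos (by omega), bb, if_pos (by omega), bb, if_pos (by omega)]
    rw [show (k+3+j+1) - (k+2) = j+2 by omega, show (k+3+j) - (k+1) = j+2 by omega,
        show (k+3+j) - (k+2) = j+1 by omega, show (k+3+j) - (k+3) = j by omega,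
        show 2*(k+3+j+1) = 2*(k+3+j)+2 by ring]
    have := bb_main k j
    push_cast at this ⊢
    convert this using 2 <;> push_cast <;> ring




lemma catalan_cast (n : ℕ) : (catalan n : ℝ) = ((2*n).choose n : ℝ) / (n+1) := by
  have h := succ_mul_catalan_eq_centralBinom n
  rw [Nat.centralBinom_eq_two_mul_choose] at h
  have h2 : ((n:ℝ)+1) * (catalan n : ℝ) = ((2*n).choose n : ℝ) := by exact_mod_cast h
  have : (n:ℝ)+1 ≠ 0 := by positivity
  field_simp [← h2]
  rw [← h2]; ring

lemma bb_one (n : ℕ) (hn : 1 ≤ n) : bb n 1 = catalan n := by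
  obtain ⟨k, rfl⟩ : ∃ k, n = k+1 := ⟨n-1, by omega⟩
  rw [bb, if_pos (by omega), catalan_cast]
  rw [show (k+1) - 1 = k by omega, show 2*(k+1) = k + (k+2) by ring]
  rw [choose_cast_add, show k+(k+2) = (k+1)+(k+1) by ring, choose_cast_add]
  have f1 : ((k+2)! : ℝ) = (k+2) * ((k+1) * (k !)) := by
    rw [show k+2 = (k+1)+1 by ring, Nat.factorial_succ, Nat.factorial_succ]; push_cast; ring
  have f2 : ((k+1)! : ℝ) = (k+1) * (k !) := by rw [Nat.factorial_succ]; push_cast; ring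
  rw [f1, f2]
  have p1 : (0:ℝ) < (k ! : ℝ) := by exact_mod_cast Nat.factorial_pos _
  have p2 : (0:ℝ) < (((k+1)+(k+1))! : ℝ) := by exact_mod_cast Nat.factorial_pos _
  push_cast
  field_simp
  ring

lemma bb_two (n : ℕ) (hn : 1 ≤ n) : bb n 2 = (catalan (n+1) : ℝ) - 2 * catalan n := by
  rcases Nat.eq_or_lt_of_le hn with h1 | h1
  · rw [← h1]
    rw [bb, if_neg (by omega)]
    norm_num [catalan_two, catalan_one]
  · obtain ⟨k, rfl⟩ : ∃ k, n = k+2 := ⟨n-2, by omega⟩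
    rw [bb, if_pos (by omega), catalan_cast, catalan_cast]
    rw [show (k+2) - 2 = k by omega, show 2*(k+2) = k + (k+4) by ring]
    rw [choose_cast_add]
    rw [show 2*(k+2+1) = (k+3)+(k+3) by ring, choose_cast_add]
    rw [show k+(k+4) = (k+2)+(k+2) by ring, choose_cast_add]
    have f1 : ((k+4)! : ℝ) = (k+4) * ((k+3) * ((k+2) * ((k+1) * (k !)))) := by
      rw [show k+4 = (k+3)+1 by ring, Nat.factorial_succ, show k+3 = (k+2)+1 by ring,
          Nat.factorial_succ, show k+2 = (k+1)+1 by ring, Nat.factorial_succ, Nat.factorial_succ]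
      push_cast; ring
    have f2 : ((k+3)! : ℝ) = (k+3) * ((k+2) * ((k+1) * (k !))) := by
      rw [show k+3 = (k+2)+1 by ring, Nat.factorial_succ, show k+2 = (k+1)+1 by ring,
          Nat.factorial_succ, Nat.factorial_succ]
      push_cast; ring
    have f3 : ((k+2)! : ℝ) = (k+2) * ((k+1) * (k !)) := by
      rw [show k+2 = (k+1)+1 by ring, Nat.factorial_succ, Nat.factorial_succ]; push_cast; ring
    have f4 : (((k+3)+(k+3))! : ℝ) = (2*k+6) * ((2*k+5) * (((k+2)+(k+2))!)) := by
      rw [show (k+3)+(k+3) = ((k+2)+(k+2)+1)+1 by ring, Nat.factorial_succ, Nat.factorial_succ]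
      push_cast; ring
    rw [f1, f2, f3, f4]
    have p1 : (0:ℝ) < (k ! : ℝ) := by exact_mod_cast Nat.factorial_pos _
    have p2 : (0:ℝ) < (((k+2)+(k+2))! : ℝ) := by exact_mod_cast Nat.factorial_pos _
    push_cast
    field_simp
    ring

-- row identity: per-term conversion
lemma row_term (n m : ℕ) (h1 : 1 ≤ m) (h2 : m ≤ n) :
    ((2*n).choose n : ℝ) * (2*((n ! : ℝ))^2 / (m * ((n-m)!) * ((n+m)!))) / n
      = 2 * bb n m / m^2 := by
  rw [bb, if_pos ⟨h1, h2⟩]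
  obtain ⟨a, rfl⟩ : ∃ a, m = a+1 := ⟨m-1, by omega⟩
  obtain ⟨c, hc⟩ : ∃ c, n = a+1+c := ⟨n-(a+1), by omega⟩
  subst hc
  rw [show (a+1+c) - (a+1) = c by omega, show (a+1+c) + (a+1) = 2*a+c+2 by omega,
      show 2*(a+1+c) = (a+1+c) + (a+1+c) by ring]
  rw [choose_cast_add, show (a+1+c)+(a+1+c) = c+(2*a+c+2) by ring, choose_cast_add]
  have f1 : ((a+1+c)! : ℝ) = ((a+c+1)!) := by norm_num [show a+1+c = a+c+1 by omega]
  rw [f1]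
  have p1 : (0:ℝ) < ((a+c+1)! : ℝ) := by exact_mod_cast Nat.factorial_pos _
  have p2 : (0:ℝ) < (c ! : ℝ) := by exact_mod_cast Nat.factorial_pos _
  have p3 : (0:ℝ) < ((2*a+c+2)! : ℝ) := by exact_mod_cast Nat.factorial_pos _
  have p4 : (0:ℝ) < ((c+(2*a+c+2))! : ℝ) := by exact_mod_cast Nat.factorial_pos _
  have e1 : ((c+(2*a+c+2))! : ℝ) = (((a+1+c)+(a+1+c))!) := by
    norm_num [show c+(2*a+c+2) = (a+1+c)+(a+1+c) by omega]
  push_cast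
  field_simp



lemma stepA (a c : ℕ) :
    2*(((a+c+2)! : ℝ))^2 / ((a+1) * ((c+1)!) * ((2*a+c+3)!))
      = 2*(((a+c+1)! : ℝ))^2 / ((a+1) * (c !) * ((2*a+c+2)!))
        + 2*((a:ℝ)+1)*(((a+c+1)! : ℝ))^2 / (((c+1)!) * ((2*a+c+3)!)) := by
  have f1 : ((a+c+2)! : ℝ) = (a+c+2) * ((a+c+1)!) := by
    rw [show a+c+2 = (a+c+1)+1 by ring, Nat.factorial_succ]; push_cast; ring
  have f2 : ((c+1)! : ℝ) = (c+1) * (c !) := by rw [Nat.factorial_succ]; push_cast; ring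
  have f3 : ((2*a+c+3)! : ℝ) = (2*a+c+3) * ((2*a+c+2)!) := by
    rw [show 2*a+c+3 = (2*a+c+2)+1 by ring, Nat.factorial_succ]; push_cast; ring
  rw [f1, f2, f3]
  have p1 : (0:ℝ) < ((a+c+1)! : ℝ) := by exact_mod_cast Nat.factorial_pos _
  have p2 : (0:ℝ) < (c ! : ℝ) := by exact_mod_cast Nat.factorial_pos _
  have p3 : (0:ℝ) < ((2*a+c+2)! : ℝ) := by exact_mod_cast Nat.factorial_pos _
  field_simp
  ring

lemma stepE (a c : ℕ) :
    2*((a:ℝ)+1)*(((a+c+1)! : ℝ))^2 / (((c+1)!) * ((2*a+c+3)!))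
      = (((a+c+1)! : ℝ))^2 / (((c+1)!) * ((2*a+c+2)!))
        - (((a+c+1)! : ℝ))^2 / ((c !) * ((2*a+c+3)!)) := by
  have f2 : ((c+1)! : ℝ) = (c+1) * (c !) := by rw [Nat.factorial_succ]; push_cast; ring
  have f3 : ((2*a+c+3)! : ℝ) = (2*a+c+3) * ((2*a+c+2)!) := by
    rw [show 2*a+c+3 = (2*a+c+2)+1 by ring, Nat.factorial_succ]; push_cast; ring
  rw [f2, f3]
  have p2 : (0:ℝ) < (c ! : ℝ) := by exact_mod_cast Nat.factorial_pos _
  have p3 : (0:ℝ) < ((2*a+c+2)! : ℝ) := by exact_mod_cast Nat.factorial_pos _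
  field_simp
  ring

lemma harmonic_id : ∀ n : ℕ, 1 ≤ n →
    ∑ k ∈ Finset.Icc 1 n, (1:ℝ)/k
      = ∑ m ∈ Finset.Icc 1 n, 2*((n ! : ℝ))^2 / (m * ((n-m)!) * ((n+m)!)) := by
  intro n hn
  induction n with
  | zero => omega
  | succ n ih =>
    rcases Nat.eq_or_lt_of_le hn with h1 | h1
    · have : n = 0 := by omega
      subst this
      norm_num [Nat.factorial]
    · have hn1 : 1 ≤ n := by omega
      have IH := ih hn1
      rw [Finset.sum_Icc_succ_top (by omega : 1 ≤ n+1), IH,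
          Finset.sum_Icc_succ_top (by omega : 1 ≤ n+1)]
      set g : ℕ → ℝ := fun m => ((n ! : ℝ))^2 / ((((n+1)-m)!) * ((n+m)!)) with hg
      have key : ∀ m ∈ Finset.Icc 1 n,
          2*(((n+1)! : ℝ))^2 / (m * (((n+1)-m)!) * (((n+1)+m)!))
            = 2*((n ! : ℝ))^2 / (m * ((n-m)!) * ((n+m)!)) + (g m - g (m+1)) := by
        intro m hm
        simp only [Finset.mem_Icc] at hm
        obtain ⟨a, rfl⟩ : ∃ a, m = a+1 := ⟨m-1, by omega⟩
        obtain ⟨c, hc⟩ : ∃ c, n = a+1+c := ⟨n-(a+1), by omega⟩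
        subst hc
        simp only [hg]
        rw [show (a+1+c+1) - (a+1) = c+1 by omega, show (a+1+c) - (a+1) = c by omega,
            show (a+1+c+1) + (a+1) = 2*a+c+3 by omega, show (a+1+c) + (a+1) = 2*a+c+2 by omega,
            show a+1+c+1 = a+c+2 by omega, show a+1+c = a+c+1 by omega,
            show (a+c+2) - (a+1+1) = c by omega, show a+c+1+(a+1+1) = 2*a+c+3 by omega]
        push_cast
        linarith [stepA a c, stepE a c]
      rw [Finset.sum_congr rfl key, Finset.sum_add_distrib]
      have tel : ∑ m ∈ Finset.Icc 1 n, (g m - g (m+1)) = g 1 - g (n+1) := by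
        rw [show Finset.Icc 1 n = Finset.Ico 1 (n+1) by rw [Finset.Ico_add_one_right_eq_Icc],
            Finset.sum_Ico_eq_sum_range]
        simp only [show n+1-1 = n by omega]
        have := Finset.sum_range_sub' (fun i => g (1+i)) n
        simpa [add_comm, add_assoc, add_left_comm] using this
      rw [tel]
      have g1 : g 1 = 1/((n:ℝ)+1) := by
        simp only [hg]
        rw [show (n+1)-1 = n by omega]
        have f1 : ((n+1)! : ℝ) = (n+1) * (n !) := by rw [Nat.factorial_succ]; push_cast; ring
        rw [f1]
        have p1 : (0:ℝ) < (n ! : ℝ) := by exact_mod_cast Nat.factorial_pos _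
        field_simp
      have glast : 2*(((n+1)! : ℝ))^2 / ((n+1) * (((n+1)-(n+1))!) * (((n+1)+(n+1))!))
          = g (n+1) := by
        simp only [hg]
        rw [show (n+1)-(n+1) = 0 by omega, show (n+1)+(n+1) = (2*n+1)+1 by omega,
            show n+(n+1) = 2*n+1 by omega]
        have f1 : ((n+1)! : ℝ) = (n+1) * (n !) := by rw [Nat.factorial_succ]; push_cast; ring
        have f2 : (((2*n+1)+1)! : ℝ) = (2*n+2) * ((2*n+1)!) := by
          rw [Nat.factorial_succ]; push_cast; ring
        rw [f1, f2, Nat.factorial_zero]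
        have p1 : (0:ℝ) < (n ! : ℝ) := by exact_mod_cast Nat.factorial_pos _
        have p2 : (0:ℝ) < ((2*n+1)! : ℝ) := by exact_mod_cast Nat.factorial_pos _
        have p3 : (0:ℝ) < (n:ℝ)+1 := by positivity
        field_simp
      push_cast at glast ⊢
      rw [← glast]
      rw [g1]
      ring




noncomputable def xr : ℝ := 3/16

lemma xr_pos : 0 < xr := by norm_num [xr]
lemma xr_nonneg : 0 ≤ xr := le_of_lt xr_pos

lemma catalan_le_four_pow (n : ℕ) : (catalan n : ℝ) ≤ 4 ^ n := by
  have h1 : catalan n ≤ n.centralBinom := by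
    calc catalan n ≤ (n+1) * catalan n := Nat.le_mul_of_pos_left _ (by omega)
      _ = n.centralBinom := succ_mul_catalan_eq_centralBinom n
  have h2 : n.centralBinom ≤ 4^n := by
    rw [Nat.centralBinom_eq_two_mul_choose]
    calc (2*n).choose n ≤ ∑ k ∈ Finset.range (2*n+1), (2*n).choose k :=
          Finset.single_le_sum (f := fun k => (2*n).choose k) (fun _ _ => Nat.zero_le _)
            (by simp [Nat.lt_succ_iff]; omega)
      _ = 2 ^ (2*n) := Nat.sum_range_choose _
      _ = 4 ^ n := by rw [pow_mul]; norm_num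
  calc (catalan n : ℝ) ≤ (n.centralBinom : ℝ) := by exact_mod_cast h1
    _ ≤ ((4^n : ℕ) : ℝ) := by exact_mod_cast h2
    _ = 4^n := by push_cast; ring

lemma cat_term_le (n : ℕ) : (catalan n : ℝ) * xr ^ n ≤ (3/4) ^ n := by
  have := catalan_le_four_pow n
  calc (catalan n : ℝ) * xr^n ≤ 4^n * xr^n := by
        apply mul_le_mul_of_nonneg_right this (pow_nonneg xr_nonneg n)
    _ = (3/4)^n := by rw [← mul_pow]; norm_num [xr]

lemma summable_cat : Summable (fun n => (catalan n : ℝ) * xr ^ n) := by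
  apply Summable.of_nonneg_of_le
    (fun n => mul_nonneg (Nat.cast_nonneg _) (pow_nonneg xr_nonneg _)) cat_term_le
  exact summable_geometric_of_lt_one (by norm_num) (by norm_num)

lemma summable_bb (m : ℕ) : Summable (fun n => bb n m * xr ^ n) := by
  apply Summable.of_nonneg_of_le
    (fun n => mul_nonneg (bb_nonneg n m) (pow_nonneg xr_nonneg _))
    (fun n => ?_) (summable_geometric_of_lt_one (r := 3/4) (by norm_num) (by norm_num))
  calc bb n m * xr^n ≤ 4^n * xr^n :=
        mul_le_mul_of_nonneg_right (bb_le n m) (pow_nonneg xr_nonneg _)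
    _ = (3/4)^n := by rw [← mul_pow]; norm_num [xr]

lemma cat_gf : ∑' n, (catalan n : ℝ) * xr ^ n = 4/3 := by
  set c := ∑' n, (catalan n : ℝ) * xr ^ n with hc
  have habs : Summable fun n => ‖(catalan n : ℝ) * xr ^ n‖ :=
    summable_norm_iff.mpr summable_cat
  have hsq : c * c = ∑' n, ∑ k ∈ Finset.range (n+1),
      ((catalan k : ℝ) * xr^k) * ((catalan (n-k) : ℝ) * xr^(n-k)) :=
    tsum_mul_tsum_eq_tsum_sum_range_of_summable_norm habs habs
  have hconv : ∀ n : ℕ, (∑ k ∈ Finset.range (n+1),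
      ((catalan k : ℝ) * xr^k) * ((catalan (n-k) : ℝ) * xr^(n-k)))
        = (catalan (n+1) : ℝ) * xr^n := by
    intro n
    have : ∀ k ∈ Finset.range (n+1),
        ((catalan k : ℝ) * xr^k) * ((catalan (n-k) : ℝ) * xr^(n-k))
          = ((catalan k : ℝ) * (catalan (n-k) : ℝ)) * xr^n := by
      intro k hk
      simp only [Finset.mem_range, Nat.lt_succ_iff] at hk
      rw [show ((catalan k : ℝ) * xr^k) * ((catalan (n-k) : ℝ) * xr^(n-k))
          = ((catalan k : ℝ) * (catalan (n-k) : ℝ)) * (xr^k * xr^(n-k)) by ring,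
        ← pow_add, Nat.add_sub_cancel' hk]
    rw [Finset.sum_congr rfl this, ← Finset.sum_mul]
    congr 1
    rw [catalan_succ n]
    push_cast [Fin.sum_univ_eq_sum_range (fun i => (catalan i : ℝ) * (catalan (n-i) : ℝ)) (n+1)]
    norm_cast
  have hsq2 : c * c = ∑' n, (catalan (n+1) : ℝ) * xr ^ n := by
    rw [hsq]; exact tsum_congr hconv
  have hshift : xr * (c * c) = c - 1 := by
    rw [hsq2, ← tsum_mul_left]
    have h1 : ∀ n : ℕ, xr * ((catalan (n+1) : ℝ) * xr^n) = (catalan (n+1) : ℝ) * xr^(n+1) := by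
      intro n; ring
    rw [tsum_congr h1]
    have := Summable.tsum_eq_zero_add summable_cat
    simp only [catalan_zero, Nat.cast_one, pow_zero, one_mul] at this
    rw [hc, this]; ring
  -- bound c ≤ 5/2
  have hbound : c ≤ 5/2 := by
    have hle : ∀ n : ℕ, (catalan n : ℝ) * xr ^ n ≤
        (if n = 0 then 1 else (3/4)^n / 2) := by
      intro n
      cases n with
      | zero => simp [xr]
      | succ k =>
        simp only [Nat.succ_ne_zero, if_false]
        have h1 : (catalan (k+1) : ℝ) ≤ 4^(k+1) / 2 := by
          have : (k+2) * catalan (k+1) = (k+1).centralBinom := succ_mul_catalan_eq_centralBinom (k+1)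
          have h2 : (2:ℕ) * catalan (k+1) ≤ (k+2) * catalan (k+1) := by
            apply Nat.mul_le_mul_right; omega
          rw [this] at h2
          have h3 : (k+1).centralBinom ≤ 4^(k+1) := by
            rw [Nat.centralBinom_eq_two_mul_choose]
            calc (2*(k+1)).choose (k+1) ≤ ∑ i ∈ Finset.range (2*(k+1)+1), (2*(k+1)).choose i :=
                  Finset.single_le_sum (f := fun i => (2*(k+1)).choose i) (fun _ _ => Nat.zero_le _)
                    (by simp [Nat.lt_succ_iff])
              _ = 2 ^ (2*(k+1)) := Nat.sum_range_choose _
              _ = 4 ^ (k+1) := by rw [pow_mul]; norm_num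
          have h4 : 2 * catalan (k+1) ≤ 4^(k+1) := le_trans h2 h3
          have h5 : (2:ℝ) * (catalan (k+1) : ℝ) ≤ 4^(k+1) := by exact_mod_cast h4
          linarith
        calc (catalan (k+1) : ℝ) * xr^(k+1) ≤ (4^(k+1)/2) * xr^(k+1) :=
              mul_le_mul_of_nonneg_right h1 (pow_nonneg xr_nonneg _)
          _ = (3/4)^(k+1) / 2 := by rw [div_mul_eq_mul_div, ← mul_pow]; norm_num [xr]
    have hsb : Summable (fun n => if n = 0 then (1:ℝ) else (3/4)^n / 2) := by
      apply Summable.of_nonneg_of_le (fun n => by positivity) (fun n => ?_)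
        (summable_geometric_of_lt_one (r := 3/4) (by norm_num) (by norm_num) |>.mul_left 2)
      split
      case isTrue h => subst h; norm_num
      case isFalse h => nlinarith [pow_nonneg (show (0:ℝ) ≤ 3/4 by norm_num) n]
    have := Summable.tsum_le_tsum hle summable_cat hsb
    rw [← hc] at this
    refine le_trans this ?_
    rw [Summable.tsum_eq_zero_add hsb]
    simp only [if_pos rfl]
    have : ∀ n : ℕ, (if n+1 = 0 then (1:ℝ) else (3/4)^(n+1)/2) = (3/8) * (3/4)^n := by
      intro n; simp only [Nat.succ_ne_zero, if_false]; ring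
    rw [tsum_congr this, tsum_mul_left, tsum_geometric_of_lt_one (by norm_num) (by norm_num)]
    norm_num
  -- solve quadratic
  have hq : (3*c - 4) * (c - 4) = 0 := by
    have : xr * (c*c) = c - 1 := hshift
    rw [xr] at this
    nlinarith [this]
  rcases mul_eq_zero.mp hq with h | h
  · linarith
  · linarith

noncomputable def qq (m : ℕ) : ℝ := ∑' n, bb n m * xr ^ n

lemma bb_zero_left (m : ℕ) : bb 0 m = 0 := by
  rw [bb, if_neg (by omega)]

lemma cat_shift1 : ∑' n : ℕ, (catalan (n+1) : ℝ) * xr ^ (n+1) = 1/3 := by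
  have h := Summable.tsum_eq_zero_add summable_cat
  rw [cat_gf] at h
  simp only [catalan_zero, Nat.cast_one, pow_zero, one_mul] at h
  linarith

lemma summable_cat_shift1 : Summable (fun n : ℕ => (catalan (n+1) : ℝ) * xr ^ (n+1)) :=
  (summable_nat_add_iff 1).mpr summable_cat

lemma cat_shift2 : ∑' n : ℕ, (catalan (n+2) : ℝ) * xr ^ (n+2) = 7/48 := by
  have h := Summable.tsum_eq_zero_add summable_cat_shift1
  rw [cat_shift1, catalan_one] at h
  have h2 : ∑' n:ℕ, (catalan (n+2):ℝ) * xr^(n+2)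
      = ∑' n:ℕ, (catalan (n+1+1):ℝ)*xr^(n+1+1) := by norm_num
  rw [h2]
  have hx : xr = 3/16 := rfl
  rw [hx] at h ⊢
  norm_num at h
  linarith

lemma qq_one : qq 1 = 1/3 := by
  rw [qq, Summable.tsum_eq_zero_add (summable_bb 1), bb_zero_left]
  simp only [pow_zero, mul_zero, zero_mul, zero_add]
  rw [← cat_shift1]
  apply tsum_congr
  intro n
  rw [bb_one (n+1) (by omega)]

lemma summable_cat_shift21 : Summable (fun n : ℕ => (catalan (n+2) : ℝ) * xr ^ (n+1)) := by
  apply Summable.of_nonneg_of_le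
    (fun n => mul_nonneg (Nat.cast_nonneg _) (pow_nonneg xr_nonneg _)) (fun n => ?_)
    ((summable_geometric_of_lt_one (r := 3/4) (by norm_num) (by norm_num)).mul_left 3)
  have key4 : (4:ℝ)^(n+2) * xr^(n+1) = 3 * (3/4)^n := by
    have h44 : ((4:ℝ))^(n+1) * (3/16)^(n+1) = (3/4)^(n+1) := by
      rw [← mul_pow]; norm_num
    calc (4:ℝ)^(n+2) * xr^(n+1) = 4 * (4^(n+1) * (3/16)^(n+1)) := by
          rw [show xr = 3/16 from rfl]; ring
      _ = 4 * (3/4)^(n+1) := by rw [h44]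
      _ = 3 * (3/4)^n := by rw [pow_succ]; ring
  calc (catalan (n+2) : ℝ) * xr^(n+1) ≤ 4^(n+2) * xr^(n+1) :=
        mul_le_mul_of_nonneg_right (catalan_le_four_pow (n+2)) (pow_nonneg xr_nonneg _)
    _ = 3 * (3/4)^n := key4

lemma cat_shift21 : ∑' n : ℕ, (catalan (n+2) : ℝ) * xr ^ (n+1) = 7/9 := by
  have h : ∑' n : ℕ, xr * ((catalan (n+2) : ℝ) * xr ^ (n+1)) = 7/48 := by
    rw [← cat_shift2]
    apply tsum_congr; intro n; ring
  rw [tsum_mul_left] at h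
  have : xr ≠ 0 := ne_of_gt xr_pos
  field_simp [xr] at h ⊢
  rw [show xr = 3/16 from rfl] at h ⊢
  linarith

lemma qq_two : qq 2 = 1/9 := by
  rw [qq, Summable.tsum_eq_zero_add (summable_bb 2), bb_zero_left]
  simp only [pow_zero, mul_zero, zero_mul, zero_add]
  have step : ∀ n : ℕ, bb (n+1) 2 * xr^(n+1)
      = (catalan (n+2) : ℝ) * xr^(n+1) - 2 * ((catalan (n+1) : ℝ) * xr^(n+1)) := by
    intro n
    rw [bb_two (n+1) (by omega)]
    ring
  rw [tsum_congr step, Summable.tsum_sub summable_cat_shift21 (summable_cat_shift1.mul_left 2),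
      tsum_mul_left, cat_shift21, cat_shift1]
  norm_num

lemma qq_rec (k : ℕ) : qq (k+3) = (10/3) * qq (k+2) - qq (k+1) := by
  have h0 : qq (k+2) = ∑' n, bb (n+1) (k+2) * xr^(n+1) := by
    rw [qq, Summable.tsum_eq_zero_add (summable_bb (k+2)), bb_zero_left]
    simp
  have step : ∀ n : ℕ, bb (n+1) (k+2) * xr^(n+1)
      = xr * (bb n (k+1) * xr^n) + 2*xr * (bb n (k+2) * xr^n) + xr * (bb n (k+3) * xr^n) := by
    intro n
    rw [bb_rec n k]
    ring
  rw [tsum_congr step] at h0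
  rw [Summable.tsum_add (((summable_bb (k+1)).mul_left xr).add (((summable_bb (k+2)).mul_left (2*xr))))
      ((summable_bb (k+3)).mul_left xr)] at h0
  rw [Summable.tsum_add ((summable_bb (k+1)).mul_left xr) ((summable_bb (k+2)).mul_left (2*xr))] at h0
  rw [tsum_mul_left, tsum_mul_left, tsum_mul_left] at h0
  have e1 : qq (k+2) = xr * qq (k+1) + 2*xr * qq (k+2) + xr * qq (k+3) := h0
  have hx : xr = 3/16 := rfl
  rw [hx] at e1
  linarith

lemma qq_val : ∀ m : ℕ, qq (m+1) = (1/3)^(m+1) := by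
  have key : ∀ m : ℕ, qq (m+1) = (1/3)^(m+1) ∧ qq (m+2) = (1/3)^(m+2) := by
    intro m
    induction m with
    | zero =>
      constructor
      · rw [qq_one]; norm_num
      · rw [qq_two]; norm_num
    | succ k ih =>
      refine ⟨ih.2, ?_⟩
      rw [show k+1+2 = k+3 by ring, qq_rec k, ih.1, ih.2]
      rw [show k+2 = (k+1)+1 by ring, show k+1+1+1 = ((k+1)+1)+1 by ring]
      rw [pow_succ, pow_succ]
      ring
  exact fun m => (key m).1



noncomputable def FF (p : ℕ × ℕ) : ℝ :=
  2 * bb (p.1+1) (p.2+1) / ((p.2:ℝ)+1)^2 * xr^(p.1+1)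

lemma FF_nonneg : ∀ p, 0 ≤ FF p := by
  intro p
  have h1 := bb_nonneg (p.1+1) (p.2+1)
  have h2 : (0:ℝ) < ((p.2:ℝ)+1)^2 := by positivity
  have h3 : (0:ℝ) ≤ xr^(p.1+1) := pow_nonneg xr_nonneg _
  apply mul_nonneg _ h3
  positivity

lemma FF_le (p : ℕ × ℕ) : FF p ≤ 2 * (3/4)^(p.1+1) := by
  rcases p with ⟨n, m⟩
  have h1 : bb (n+1) (m+1) ≤ 4^(n+1) := bb_le _ _
  have h2 : (1:ℝ) ≤ ((m:ℝ)+1)^2 := by nlinarith [Nat.cast_nonneg (α := ℝ) m]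
  have h3 : 2 * bb (n+1) (m+1) / ((m:ℝ)+1)^2 ≤ 2 * 4^(n+1) := by
    have hb := bb_nonneg (n+1) (m+1)
    rw [div_le_iff₀ (by positivity)]
    nlinarith [pow_pos (show (0:ℝ) < 4 by norm_num) (n+1)]
  calc FF (n, m) ≤ 2 * 4^(n+1) * xr^(n+1) :=
        mul_le_mul_of_nonneg_right h3 (pow_nonneg xr_nonneg _)
    _ = 2 * (3/4)^(n+1) := by
        rw [mul_assoc, show (4:ℝ)^(n+1) * xr^(n+1) = (4*xr)^(n+1) by rw [mul_pow]]
        norm_num [show xr = 3/16 from rfl]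

lemma FF_row_summable (n : ℕ) : Summable (fun m => FF (n, m)) := by
  apply summable_of_ne_finset_zero (s := Finset.range (n+1))
  intro m hm
  simp only [Finset.mem_range, not_lt] at hm
  rw [FF]
  simp only
  rw [bb, if_neg (by omega)]
  ring

lemma FF_row_eq (n : ℕ) :
    ∑' m, FF (n, m)
      = 3^(n+1) * (∑ k ∈ Finset.Icc 1 (n+1), (1:ℝ)/k) *
          (((2*(n+1)).choose (n+1) : ℕ) : ℝ) / ((n+1) * 16^(n+1)) := by
  have hfin : ∑' m, FF (n, m) = ∑ m ∈ Finset.range (n+1), FF (n, m) := by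
    apply tsum_eq_sum
    intro m hm
    simp only [Finset.mem_range, not_lt] at hm
    rw [FF]; simp only; rw [bb, if_neg (by omega)]; ring
  rw [hfin]
  -- convert range sum to Icc sum
  have hre : ∑ m ∈ Finset.range (n+1), FF (n, m)
      = ∑ j ∈ Finset.Icc 1 (n+1), 2 * bb (n+1) j / (j:ℝ)^2 * xr^(n+1) := by
    rw [show Finset.Icc 1 (n+1) = Finset.Ico 1 (n+2) by rw [show n+2 = (n+1)+1 by ring, Finset.Ico_add_one_right_eq_Icc],
        Finset.sum_Ico_eq_sum_range]
    simp only [show n+2-1 = n+1 by omega]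
    apply Finset.sum_congr rfl
    intro i _
    rw [FF]
    simp only
    congr 2
    · rw [show 1+i = i+1 by ring]
    · push_cast; ring
  rw [hre]
  have hrow : ∑ j ∈ Finset.Icc 1 (n+1), 2 * bb (n+1) j / (j:ℝ)^2
      = (∑ k ∈ Finset.Icc 1 (n+1), (1:ℝ)/k) * (((2*(n+1)).choose (n+1) : ℕ) : ℝ) / ((n:ℝ)+1) := by
    rw [harmonic_id (n+1) (by omega), Finset.sum_mul, Finset.sum_div]
    apply Finset.sum_congr rfl
    intro m hm
    simp only [Finset.mem_Icc] at hm
    rw [← row_term (n+1) m hm.1 hm.2]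
    push_cast
    ring
  rw [← Finset.sum_mul, hrow]
  rw [show xr = 3/16 from rfl]
  have h16 : ((16:ℝ))^(n+1) ≠ 0 := by positivity
  have hn1 : ((n:ℝ)+1) ≠ 0 := by positivity
  rw [div_pow]
  push_cast
  field_simp

lemma FF_col_summable (m : ℕ) : Summable (fun n => FF (n, m)) := by
  have : Summable (fun n => bb (n+1) (m+1) * xr^(n+1)) :=
    (summable_nat_add_iff 1).mpr (summable_bb (m+1))
  apply Summable.congr ((this.mul_left (2 / ((m:ℝ)+1)^2)))
  intro n
  rw [FF]
  simp only
  ring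

lemma FF_col_eq (m : ℕ) :
    ∑' n, FF (n, m) = 2 * ((1:ℝ)/3)^(m+1) / ((m:ℝ)+1)^2 := by
  have h1 : ∑' n, FF (n, m)
      = (2 / ((m:ℝ)+1)^2) * ∑' n, bb (n+1) (m+1) * xr^(n+1) := by
    rw [← tsum_mul_left]
    apply tsum_congr
    intro n
    rw [FF]; simp only; ring
  have h2 : ∑' n, bb (n+1) (m+1) * xr^(n+1) = qq (m+1) := by
    rw [qq, Summable.tsum_eq_zero_add (summable_bb (m+1)), bb_zero_left]
    simp
  rw [h1, h2, qq_val m]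
  rw [show ((1:ℝ)/3)^(m+1) = (1/3:ℝ)^(m+1) by norm_num]
  ring

lemma FF_rowsum_summable : Summable (fun n => ∑' m, FF (n, m)) := by
  have hg : Summable (fun n : ℕ => 2*((n:ℝ)+1) * (3/4)^n) := by
    have h1 : Summable (fun n:ℕ => (n:ℝ)*(3/4)^n) := by
      have := summable_pow_mul_geometric_of_norm_lt_one (R := ℝ) 1
        (r := 3/4) (by rw [Real.norm_eq_abs, abs_of_nonneg (by norm_num : (0:ℝ) ≤ 3/4)]; norm_num)
      simpa using this
    have h2 : Summable (fun n:ℕ => ((3:ℝ)/4)^n) :=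
      summable_geometric_of_lt_one (by norm_num) (by norm_num)
    apply Summable.congr ((h1.mul_left 2).add (h2.mul_left 2))
    intro n; ring
  apply Summable.of_nonneg_of_le (fun n => tsum_nonneg (fun m => FF_nonneg (n, m))) _ hg
  intro n
  have hfin : ∑' m, FF (n, m) = ∑ m ∈ Finset.range (n+1), FF (n, m) := by
    apply tsum_eq_sum
    intro m hm
    simp only [Finset.mem_range, not_lt] at hm
    rw [FF]; simp only; rw [bb, if_neg (by omega)]; ring
  rw [hfin]
  calc ∑ m ∈ Finset.range (n+1), FF (n, m)
      ≤ ∑ m ∈ Finset.range (n+1), 2*(3/4:ℝ)^(n+1) :=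
        Finset.sum_le_sum (fun m _ => FF_le (n, m))
    _ = (n+1) * (2*(3/4)^(n+1)) := by
        rw [Finset.sum_const, Finset.card_range, nsmul_eq_mul]; push_cast; ring
    _ ≤ 2*((n:ℝ)+1) * (3/4)^n := by
        rw [pow_succ]
        have : (0:ℝ) ≤ (3/4)^n := by positivity
        nlinarith [Nat.cast_nonneg (α := ℝ) n]

lemma FF_summable : Summable FF := by
  rw [show FF = (fun p : ℕ × ℕ => FF p) from rfl]
  apply (summable_prod_of_nonneg FF_nonneg).mpr
  exact ⟨FF_row_summable, FF_rowsum_summable⟩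

set_option maxHeartbeats 1000000 in
theorem sum_harmonic_central_binom_3pow_16pow :
    ∑' n : ℕ, 3 ^ (n + 1) * (∑ k ∈ Finset.Icc 1 (n + 1), (1 : ℝ) / k) *
        ((2 * (n + 1)).choose (n + 1)) / ((n + 1) * 16 ^ (n + 1))
      = 2 * ∑' m : ℕ, ((1 : ℝ) / 3) ^ (m + 1) / (m + 1) ^ 2 := by
  have step1 : ∑' n : ℕ, 3 ^ (n + 1) * (∑ k ∈ Finset.Icc 1 (n + 1), (1 : ℝ) / k) *
        ((2 * (n + 1)).choose (n + 1)) / ((n + 1) * 16 ^ (n + 1))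
      = ∑' (n : ℕ) (m : ℕ), FF (n, m) := by
    apply tsum_congr
    intro n
    rw [FF_row_eq n]
  rw [step1]
  rw [← Summable.tsum_prod' FF_summable FF_row_summable]
  have hswap : ∑' p : ℕ × ℕ, FF p = ∑' (m : ℕ) (n : ℕ), FF (n, m) := by
    rw [Summable.tsum_prod' FF_summable FF_row_summable]
    have hU : Summable (Function.uncurry (fun n m => FF (n, m))) := by
      exact FF_summable
    exact (Summable.tsum_comm' (f := fun n m => FF (n,m)) hU FF_row_summable FF_col_summable).symm
  rw [hswap]
  have step2 : ∑' (m : ℕ) (n : ℕ), FF (n, m)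
      = ∑' m : ℕ, 2 * ((1:ℝ)/3)^(m+1) / ((m:ℝ)+1)^2 := by
    apply tsum_congr
    intro m
    exact FF_col_eq m
  rw [step2, ← tsum_mul_left]
  apply tsum_congr
  intro m
  ring
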